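/- arXiv:2507.08956 — 3 statements merged into one kernel-verified Lean document; each statement's English description precedes it below -/
import Mathlib

section
/- Let A be a symmetric d×d real matrix with −L·I ⪯ A ⪯ L·I, and let 0 ≤ t ≤ 1/(2(2L+1)) with L ≥ 1. Then the matrix T = (1−t)·I − 2t·A is invertible and satisfies (1 − 4tL)·I ⪯ T⁻² ⪯ (1 + 18tL)·I and (1 − 2tL)·I ⪯ T⁻¹ ⪯ (1 + 6tL)·I. -/
/-!
In an eigenbasis of `A`, the matrix `T` is `g(A)` with `g x = 1 - t - 2 t x`, and on the spectrum
`[-L, L]` one has `1 - s ≤ g ≤ 1 + 2tL` with `s = t(2L + 1) ≤ 1/2`. The Loewner bounds are thus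
scalar bounds on `g⁻¹` and `g⁻²` over this interval. The upper ones are the chords
`(1 - s)⁻¹ ≤ 1 + 2s` and `(1 - s)⁻² ≤ 1 + 6s` of convex functions on `[0, 1/2]`, combined with
`s ≤ 3tL` (as `L ≥ 1`).
-/

open Set
open scoped MatrixOrder ComplexOrder

section Scalar

variable {m s u : ℝ}

lemma one_sub_le_inv_of_le_one_add (hm : 0 < m) (h : m ≤ 1 + u) : 1 - u ≤ m⁻¹ := by
  rw [← one_div, le_div_iff₀ hm]
  nlinarith [sq_nonneg (m - 1)]

lemma one_sub_two_mul_le_inv_sq_of_le_one_add (hm : 0 < m) (hu : u ≤ 1) (h : m ≤ 1 + u) :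
    1 - 2 * u ≤ m⁻¹ ^ 2 := by
  have := one_sub_le_inv_of_le_one_add hm h
  nlinarith [pow_le_pow_left₀ (by linarith) this 2, sq_nonneg u]

lemma inv_le_one_add_two_mul_of_one_sub_le (hs0 : 0 ≤ s) (hs : s ≤ 1 / 2) (h : 1 - s ≤ m) :
    m⁻¹ ≤ 1 + 2 * s := by
  rw [inv_le_iff_one_le_mul₀ (by linarith)]
  nlinarith

lemma inv_sq_le_one_add_six_mul_of_one_sub_le (hs0 : 0 ≤ s) (hs : s ≤ 1 / 2) (h : 1 - s ≤ m) :
    m⁻¹ ^ 2 ≤ 1 + 6 * s := by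
  have hm2 : (1 - s) ^ 2 ≤ m ^ 2 := pow_le_pow_left₀ (by linarith) h 2
  rw [inv_pow, inv_le_iff_one_le_mul₀ (pow_pos (by linarith) 2)]
  nlinarith [mul_le_mul_of_nonneg_left hm2 (by linarith : 0 ≤ 1 + 6 * s),
    mul_nonneg (mul_nonneg hs0 (sub_nonneg.2 hs)) (by linarith : (0 : ℝ) ≤ 4 / 3 - s)]

end Scalar

section Affine

variable {L t x : ℝ}

lemma affine_mem_Icc (ht0 : 0 ≤ t) (hx : x ∈ Icc (-L) L) :
    1 - t - 2 * t * x ∈ Icc (1 - t * (2 * L + 1)) (1 + 2 * t * L) :=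
  ⟨by nlinarith [mul_le_mul_of_nonneg_left hx.2 ht0],
    by nlinarith [mul_le_mul_of_nonneg_left hx.1 ht0]⟩

lemma affine_pos (ht0 : 0 ≤ t) (hs : t * (2 * L + 1) ≤ 1 / 2) (hx : x ∈ Icc (-L) L) :
    0 < 1 - t - 2 * t * x := by
  linarith [(affine_mem_Icc ht0 hx).1]

lemma inv_affine_mem_Icc (hL : 1 ≤ L) (ht0 : 0 ≤ t) (hs : t * (2 * L + 1) ≤ 1 / 2)
    (hx : x ∈ Icc (-L) L) : (1 - t - 2 * t * x)⁻¹ ∈ Icc (1 - 2 * t * L) (1 + 6 * t * L) := by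
  have hm := affine_mem_Icc ht0 hx
  have hupper := inv_le_one_add_two_mul_of_one_sub_le (by positivity) hs hm.1
  exact ⟨one_sub_le_inv_of_le_one_add (affine_pos ht0 hs hx) hm.2, by nlinarith⟩

lemma inv_affine_sq_mem_Icc (hL : 1 ≤ L) (ht0 : 0 ≤ t) (hs : t * (2 * L + 1) ≤ 1 / 2)
    (hx : x ∈ Icc (-L) L) : (1 - t - 2 * t * x)⁻¹ ^ 2 ∈ Icc (1 - 4 * t * L) (1 + 18 * t * L) := by
  have hu : 2 * t * L ≤ 1 := by nlinarith
  have hm := affine_mem_Icc ht0 hx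
  have hlower := one_sub_two_mul_le_inv_sq_of_le_one_add (affine_pos ht0 hs hx) hu hm.2
  have hupper := inv_sq_le_one_add_six_mul_of_one_sub_le (by positivity) hs hm.1
  exact ⟨by linarith, by nlinarith⟩

end Affine

namespace Matrix

variable {n 𝕜 : Type*} [RCLike 𝕜] [Fintype n] [DecidableEq n] {A : Matrix n n 𝕜}

lemma IsHermitian.spectrum_subset_Icc_of_posSemidef (hA : A.IsHermitian) {L : ℝ}
    (hlower : (A + L • (1 : Matrix n n 𝕜)).PosSemidef)
    (hupper : (L • (1 : Matrix n n 𝕜) - A).PosSemidef) : spectrum ℝ A ⊆ Icc (-L) L := by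
  have : IsSelfAdjoint A := hA
  intro x hx
  refine ⟨(algebraMap_le_iff_le_spectrum (r := -L)).1 ?_ x hx,
    (le_algebraMap_iff_spectrum_le (r := L)).1 ?_ x hx⟩
  · rwa [le_iff, Algebra.algebraMap_eq_smul_one, neg_smul, sub_neg_eq_add]
  · rwa [le_iff, Algebra.algebraMap_eq_smul_one]

lemma IsHermitian.inv_cfc (hA : A.IsHermitian) {g : ℝ → ℝ} (hg : ∀ x ∈ spectrum ℝ A, g x ≠ 0) :
    (cfc g A)⁻¹ = cfc (fun x => (g x)⁻¹) A := by
  have : IsSelfAdjoint A := hA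
  rw [nonsing_inv_eq_ringInverse, cfc_inv g A hg (A.finite_real_spectrum.continuousOn g)]

lemma IsHermitian.cfc_mem_Icc_smul_one (hA : A.IsHermitian) {g : ℝ → ℝ} {a b : ℝ}
    (h : ∀ x ∈ spectrum ℝ A, g x ∈ Icc a b) :
    (cfc g A - a • (1 : Matrix n n 𝕜)).PosSemidef ∧
      (b • (1 : Matrix n n 𝕜) - cfc g A).PosSemidef := by
  have : IsSelfAdjoint A := hA
  have hg := A.finite_real_spectrum.continuousOn g
  simp only [← le_iff, ← Algebra.algebraMap_eq_smul_one]
  exact ⟨algebraMap_le_cfc g a A (fun x hx => (h x hx).1) hg,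
    cfc_le_algebraMap g b A (fun x hx => (h x hx).2) hg⟩

end Matrix

/-- Bounds on the diffusion matrix for the backward algorithm: if `−L·I ⪯ A ⪯ L·I`, `L ≥ 1`,
`0 ≤ t ≤ 1/(2(2L+1))`, then `T = (1−t)I − 2tA` is invertible,
`(1 − 4tL)I ⪯ T⁻² ⪯ (1 + 18tL)I` and `(1 − 2tL)I ⪯ T⁻¹ ⪯ (1 + 6tL)I`. -/
theorem stmt4 {d : ℕ} (L t : ℝ) (hL : 1 ≤ L)
    (A : Matrix (Fin d) (Fin d) ℝ) (hA : A.IsHermitian)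
    (hlower : (A + L • (1 : Matrix (Fin d) (Fin d) ℝ)).PosSemidef)
    (hupper : (L • (1 : Matrix (Fin d) (Fin d) ℝ) - A).PosSemidef)
    (ht0 : 0 ≤ t) (ht : t ≤ 1 / (2 * (2 * L + 1))) :
    IsUnit ((1 - t) • (1 : Matrix (Fin d) (Fin d) ℝ) - (2 * t) • A) ∧
    ∀ T : Matrix (Fin d) (Fin d) ℝ,
      T = (1 - t) • (1 : Matrix (Fin d) (Fin d) ℝ) - (2 * t) • A →
      ((T⁻¹ * T⁻¹ - (1 - 4 * t * L) • (1 : Matrix (Fin d) (Fin d) ℝ)).PosSemidef ∧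
       ((1 + 18 * t * L) • (1 : Matrix (Fin d) (Fin d) ℝ) - T⁻¹ * T⁻¹).PosSemidef ∧
       (T⁻¹ - (1 - 2 * t * L) • (1 : Matrix (Fin d) (Fin d) ℝ)).PosSemidef ∧
       ((1 + 6 * t * L) • (1 : Matrix (Fin d) (Fin d) ℝ) - T⁻¹).PosSemidef) := by
  have hsa : IsSelfAdjoint A := hA
  have hspec := hA.spectrum_subset_Icc_of_posSemidef hlower hupper
  have hs : t * (2 * L + 1) ≤ 1 / 2 := by
    calc t * (2 * L + 1) ≤ 1 / (2 * (2 * L + 1)) * (2 * L + 1) := by gcongr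
      _ = 1 / 2 := by field_simp
  set g : ℝ → ℝ := fun x => 1 - t - 2 * t * x
  have hg_ne : ∀ x ∈ spectrum ℝ A, g x ≠ 0 := fun x hx => (affine_pos ht0 hs (hspec hx)).ne'
  have hT : (1 - t) • 1 - (2 * t) • A = cfc g A := by
    rw [cfc_sub .., cfc_const .., cfc_const_mul .., cfc_id' .., Algebra.algebraMap_eq_smul_one]
  refine ⟨hT ▸ (isUnit_cfc_iff g A).2 hg_ne, fun T hTdef => ?_⟩
  have hinv : T⁻¹ = cfc (fun x => (g x)⁻¹) A := by rw [hTdef, hT, hA.inv_cfc hg_ne]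
  have hinv_sq : T⁻¹ * T⁻¹ = cfc (fun x => (g x)⁻¹ ^ 2) A := by
    rw [hinv, cfc_pow _ 2 A (A.finite_real_spectrum.continuousOn _), sq]
  rw [hinv_sq, hinv]
  have hsq_mem (x) (hx : x ∈ spectrum ℝ A) := inv_affine_sq_mem_Icc hL ht0 hs (hspec hx)
  have hinv_mem (x) (hx : x ∈ spectrum ℝ A) := inv_affine_mem_Icc hL ht0 hs (hspec hx)
  exact ⟨(hA.cfc_mem_Icc_smul_one hsq_mem).1, (hA.cfc_mem_Icc_smul_one hsq_mem).2,
    (hA.cfc_mem_Icc_smul_one hinv_mem).1, (hA.cfc_mem_Icc_smul_one hinv_mem).2⟩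
end

section
/- Let L ≥ 1 and let A be a symmetric d×d real matrix with −L·I ⪯ A ⪯ L·I, and let 0 ≤ t ≤ 1/(2(2L+1)). Then T = I − 2t·A is invertible and satisfies (1 − 4tL)·I ⪯ T⁻² ⪯ (1 + 12tL)·I and (1 − 2tL)·I ⪯ T⁻¹ ⪯ (1 + 4tL)·I. -/
open Matrix


lemma scalar_aux (L t μ : ℝ) (hL : 1 ≤ L) (ht0 : 0 ≤ t)
    (ht : t ≤ 1 / (2 * (2 * L + 1))) (h1 : -L ≤ μ) (h2 : μ ≤ L) :
    0 < 1 - 2 * t * μ ∧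
    1 - 4 * t * L ≤ (1 - 2 * t * μ)⁻¹ * (1 - 2 * t * μ)⁻¹ ∧
    (1 - 2 * t * μ)⁻¹ * (1 - 2 * t * μ)⁻¹ ≤ 1 + 12 * t * L ∧
    1 - 2 * t * L ≤ (1 - 2 * t * μ)⁻¹ ∧
    (1 - 2 * t * μ)⁻¹ ≤ 1 + 4 * t * L := by
  have hd : (0:ℝ) < 2 * (2 * L + 1) := by nlinarith
  rw [le_div_iff₀ hd] at ht
  have hx : 2 * (t * L) ≤ 1 / 2 := by nlinarith
  have htL : 0 ≤ t * L := mul_nonneg ht0 (by linarith)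
  set s := 1 - 2 * t * μ with hs
  have hslow : 1 - 2 * t * L ≤ s := by nlinarith
  have hsup : s ≤ 1 + 2 * t * L := by nlinarith
  have hspos : 0 < s := by nlinarith
  have hss : 0 < s * s := mul_pos hspos hspos
  refine ⟨hspos, ?_, ?_, ?_, ?_⟩
  · rw [← mul_inv, ← one_div, le_div_iff₀ hss]
    nlinarith [mul_le_mul hsup hsup (le_of_lt hspos) (by nlinarith), sq_nonneg (t*L),
      mul_nonneg (mul_nonneg htL htL) htL]
  · rw [← mul_inv, ← one_div, div_le_iff₀ hss]
    have h4 : (0:ℝ) ≤ 1 - 4 * (t * L) := by linarith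
    have h6 : (0:ℝ) ≤ 4 - 6 * (t * L) := by nlinarith
    nlinarith [mul_le_mul hslow hslow (by nlinarith) (by nlinarith),
      mul_nonneg (mul_nonneg htL h4) h6]
  · rw [← one_div, le_div_iff₀ hspos]
    nlinarith [mul_nonneg htL htL]
  · rw [← one_div, div_le_iff₀ hspos]
    nlinarith [mul_nonneg htL htL]




/-- Bounds on the diffusion matrix for the hybrid algorithm: if `−L·I ⪯ A ⪯ L·I`, `L ≥ 1`,
`0 ≤ t ≤ 1/(2(2L+1))`, then `T = I − 2tA` is invertible,
`(1 − 4tL)I ⪯ T⁻² ⪯ (1 + 12tL)I` and `(1 − 2tL)I ⪯ T⁻¹ ⪯ (1 + 4tL)I`. -/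
theorem stmt5 {d : ℕ} (L t : ℝ) (hL : 1 ≤ L)
    (A : Matrix (Fin d) (Fin d) ℝ) (hA : A.IsHermitian)
    (hlower : (A + L • (1 : Matrix (Fin d) (Fin d) ℝ)).PosSemidef)
    (hupper : (L • (1 : Matrix (Fin d) (Fin d) ℝ) - A).PosSemidef)
    (ht0 : 0 ≤ t) (ht : t ≤ 1 / (2 * (2 * L + 1))) :
    IsUnit ((1 : Matrix (Fin d) (Fin d) ℝ) - (2 * t) • A) ∧
    ∀ T : Matrix (Fin d) (Fin d) ℝ,
      T = (1 : Matrix (Fin d) (Fin d) ℝ) - (2 * t) • A →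
      ((T⁻¹ * T⁻¹ - (1 - 4 * t * L) • (1 : Matrix (Fin d) (Fin d) ℝ)).PosSemidef ∧
       ((1 + 12 * t * L) • (1 : Matrix (Fin d) (Fin d) ℝ) - T⁻¹ * T⁻¹).PosSemidef ∧
       (T⁻¹ - (1 - 2 * t * L) • (1 : Matrix (Fin d) (Fin d) ℝ)).PosSemidef ∧
       ((1 + 4 * t * L) • (1 : Matrix (Fin d) (Fin d) ℝ) - T⁻¹).PosSemidef) := by
  classical
  set U : Matrix (Fin d) (Fin d) ℝ := (hA.eigenvectorUnitary : Matrix (Fin d) (Fin d) ℝ) with hUdef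
  have hU2 := hA.eigenvectorUnitary.2
  have hUU : U * star U = 1 := (Matrix.mem_unitaryGroup_iff).mp hU2
  have hUU' : star U * U = 1 := (Matrix.mem_unitaryGroup_iff').mp hU2
  set lam : Fin d → ℝ := hA.eigenvalues with hlam
  have hspec : A = U * Matrix.diagonal lam * star U := by
    have h := hA.spectral_theorem
    simpa [Function.comp] using h
  clear hUdef hlam hU2
  clear_value U lam
  -- general conjugation manipulation lemmas
  have hcancel : ∀ Z : Matrix (Fin d) (Fin d) ℝ, star U * (U * Z) = Z := by
    intro Z; rw [← Matrix.mul_assoc, hUU', Matrix.one_mul]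
  have hmulconj : ∀ X Y : Matrix (Fin d) (Fin d) ℝ,
      (U * X * star U) * (U * Y * star U) = U * (X * Y) * star U := by
    intro X Y
    simp only [Matrix.mul_assoc]
    rw [hcancel]
  have hsubconj : ∀ X Y : Matrix (Fin d) (Fin d) ℝ,
      (U * X * star U) - (U * Y * star U) = U * (X - Y) * star U := by
    intro X Y
    rw [← Matrix.sub_mul, ← Matrix.mul_sub]
  have hsmulone : ∀ c : ℝ, c • (1 : Matrix (Fin d) (Fin d) ℝ)
      = U * Matrix.diagonal (fun _ => c) * star U := by
    intro c
    rw [← Matrix.smul_one_eq_diagonal, Matrix.mul_smul, Matrix.mul_one, Matrix.smul_mul, hUU]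
  -- eigenvalue bounds
  have hdiagPSD : ∀ M : Matrix (Fin d) (Fin d) ℝ, M.PosSemidef →
      (star U * M * U).PosSemidef := by
    intro M hM
    have := hM.mul_mul_conjTranspose_same (star U)
    simpa [Matrix.star_eq_conjTranspose] using this
  have hAU : star U * A * U = Matrix.diagonal lam := by
    conv_lhs => rw [hspec]
    simp only [Matrix.mul_assoc]
    rw [hUU', Matrix.mul_one, hcancel]
  have hIU : ∀ c : ℝ, star U * (c • (1 : Matrix (Fin d) (Fin d) ℝ)) * U
      = Matrix.diagonal (fun _ => c) := by
    intro c
    rw [Matrix.mul_smul, Matrix.mul_one, Matrix.smul_mul, hUU', Matrix.smul_one_eq_diagonal]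
  have hup : ∀ i, lam i ≤ L := by
    intro i
    have h := hdiagPSD _ hupper
    rw [Matrix.mul_sub, Matrix.sub_mul, hIU L, hAU, Matrix.diagonal_sub] at h
    have := Matrix.posSemidef_diagonal_iff.mp h i
    simpa using by linarith [this]
  have hlow : ∀ i, -L ≤ lam i := by
    intro i
    have h := hdiagPSD _ hlower
    rw [Matrix.mul_add, Matrix.add_mul] at h
    rw [hIU L, hAU] at h
    rw [Matrix.diagonal_add] at h
    have := Matrix.posSemidef_diagonal_iff.mp h i
    simpa using by linarith [this]
  -- the diagonal entries of T
  set f : Fin d → ℝ := fun i => 1 - 2 * t * lam i with hf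
  set g : Fin d → ℝ := fun i => (f i)⁻¹ with hg
  have hkey := fun i => scalar_aux L t (lam i) hL ht0 ht (hlow i) (hup i)
  have hfpos : ∀ i, 0 < f i := fun i => (hkey i).1
  have hfg : (fun i => f i * g i) = fun _ => (1:ℝ) := by
    funext i
    exact mul_inv_cancel₀ (ne_of_gt (hfpos i))
  have hgf : (fun i => g i * f i) = fun _ => (1:ℝ) := by
    funext i
    exact inv_mul_cancel₀ (ne_of_gt (hfpos i))
  have hT : (1 : Matrix (Fin d) (Fin d) ℝ) - (2 * t) • A
      = U * Matrix.diagonal f * star U := by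
    have h1 : (1 : Matrix (Fin d) (Fin d) ℝ) = U * Matrix.diagonal (fun _ => (1:ℝ)) * star U := by
      have := hsmulone 1
      simpa using this
    have h2 : (2 * t) • A = U * Matrix.diagonal ((2*t) • lam) * star U := by
      rw [hspec, Matrix.diagonal_smul, Matrix.mul_smul, Matrix.smul_mul]
    rw [h1, h2, hsubconj, ← Matrix.diagonal_sub]
    congr 1
  have hdiaginv : (U * Matrix.diagonal f * star U) * (U * Matrix.diagonal g * star U) = 1 := by
    rw [hmulconj, Matrix.diagonal_mul_diagonal, hfg, Matrix.diagonal_one, Matrix.mul_one, hUU]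
  have hdiaginv' : (U * Matrix.diagonal g * star U) * (U * Matrix.diagonal f * star U) = 1 := by
    rw [hmulconj, Matrix.diagonal_mul_diagonal, hgf, Matrix.diagonal_one, Matrix.mul_one, hUU]
  constructor
  · exact ⟨⟨_, U * Matrix.diagonal g * star U, by rw [hT]; exact hdiaginv,
      by rw [hT]; exact hdiaginv'⟩, rfl⟩
  · intro T hTeq
    have hTinv : T⁻¹ = U * Matrix.diagonal g * star U := by
      apply Matrix.inv_eq_right_inv
      rw [hTeq, hT]
      exact hdiaginv
    have hTinv2 : T⁻¹ * T⁻¹ = U * Matrix.diagonal (fun i => g i * g i) * star U := by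
      rw [hTinv, hmulconj, Matrix.diagonal_mul_diagonal]
    have hPSD : ∀ h : Fin d → ℝ, (∀ i, 0 ≤ h i) →
        (U * Matrix.diagonal h * star U).PosSemidef := by
      intro h hh
      have := (Matrix.posSemidef_diagonal_iff.mpr hh).mul_mul_conjTranspose_same U
      simpa [Matrix.star_eq_conjTranspose] using this
    refine ⟨?_, ?_, ?_, ?_⟩
    · rw [hTinv2, hsmulone, hsubconj, Matrix.diagonal_sub]
      refine hPSD _ fun i => ?_
      have h := (hkey i).2.1
      simp only [Pi.sub_apply, hg, hf]
      linarith
    · rw [hTinv2, hsmulone, hsubconj, Matrix.diagonal_sub]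
      refine hPSD _ fun i => ?_
      have h := (hkey i).2.2.1
      simp only [Pi.sub_apply, hg, hf]
      linarith
    · rw [hTinv, hsmulone, hsubconj, Matrix.diagonal_sub]
      refine hPSD _ fun i => ?_
      have h := (hkey i).2.2.2.1
      simp only [Pi.sub_apply, hg, hf]
      linarith
    · rw [hTinv, hsmulone, hsubconj, Matrix.diagonal_sub]
      refine hPSD _ fun i => ?_
      have h := (hkey i).2.2.2.2
      simp only [Pi.sub_apply, hg, hf]
      linarith
end

section
/- Fix γ ∈ (0, 2), a point x_k ∈ ℝ^d, noise z ∈ ℝ^d, and a differentiable log-density ln p : ℝ^d → ℝ. A point x satisfies the implicit backward update x = x_k + γ[(1/2)x + ∇ln p(x)] + √γ·z if and only if x is a critical point of u ↦ −(2γ/(2−γ))·ln p(u) + (1/2)‖u − (2/(2−γ))(x_k + √γ z)‖². -/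
/-! The gradient of `u ↦ c ln p(u) + ½‖u − b‖²` at `x` is `c ∇ln p(x) + (x − b)`; with
`c = −2γ/(2−γ)` and `b = (2/(2−γ))(x_k + √γ z)` this is exactly `2/(2−γ)` times the residual
`x − (x_k + γ(½x + ∇ln p(x)) + √γ z)` of the backward update, and `2/(2−γ) ≠ 0`. -/

section Gradient

variable {F : Type*} [NormedAddCommGroup F] [InnerProductSpace ℝ F] [CompleteSpace F]
  {f g : F → ℝ} {f' g' x : F}

theorem HasGradientAt.add (hf : HasGradientAt f f' x) (hg : HasGradientAt g g' x) :
    HasGradientAt (fun u => f u + g u) (f' + g') x := by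
  rw [hasGradientAt_iff_hasFDerivAt] at *
  simpa only [map_add] using hf.fun_add hg

theorem HasGradientAt.const_mul (hf : HasGradientAt f f' x) (c : ℝ) :
    HasGradientAt (fun u => c * f u) (c • f') x := by
  rw [hasGradientAt_iff_hasFDerivAt] at *
  simpa only [map_smul] using hf.const_mul c

theorem hasGradientAt_half_norm_sub_sq (b x : F) :
    HasGradientAt (fun u => (1 / 2 : ℝ) * ‖u - b‖ ^ 2) (x - b) x := by
  rw [hasGradientAt_iff_hasFDerivAt]
  refine (((hasFDerivAt_id x).sub_const b).norm_sq.const_mul (1 / 2 : ℝ)).congr_fderiv ?_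
  ext w
  simp

theorem gradient_add_half_norm_sub_sq (hf : DifferentiableAt ℝ f x) (c : ℝ) (b : F) :
    gradient (fun u => c * f u + (1 / 2 : ℝ) * ‖u - b‖ ^ 2) x = c • gradient f x + (x - b) :=
  (hf.hasGradientAt.const_mul c |>.add (hasGradientAt_half_norm_sub_sq b x)).gradient

end Gradient

theorem backward_update_iff {E : Type*} [AddCommGroup E] [Module ℝ E] {γ : ℝ} (hγ : γ ≠ 2)
    (xk w x g : E) :
    x = xk + γ • ((1 / 2 : ℝ) • x + g) + w ↔
      -(2 * γ / (2 - γ)) • g + (x - (2 / (2 - γ)) • (xk + w)) = 0 := by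
  have hne : 2 - γ ≠ 0 := sub_ne_zero.mpr hγ.symm
  have residual : -(2 * γ / (2 - γ)) • g + (x - (2 / (2 - γ)) • (xk + w)) =
      (2 / (2 - γ)) • (x - (xk + γ • ((1 / 2 : ℝ) • x + g) + w)) := by
    match_scalars <;> field_simp
  rw [residual, smul_eq_zero, sub_eq_zero]
  simp [hne]

theorem stmt10_general {d : ℕ} (γ : ℝ) (hγ2 : γ < 2)
    (xk z x : EuclideanSpace ℝ (Fin d)) (lnp : EuclideanSpace ℝ (Fin d) → ℝ)
    (hlnp : Differentiable ℝ lnp) :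
    (x = xk + γ • ((1 / 2 : ℝ) • x + gradient lnp x) + Real.sqrt γ • z)
      ↔ gradient (fun u => -(2 * γ / (2 - γ)) * lnp u
          + (1 / 2) * ‖u - (2 / (2 - γ)) • (xk + Real.sqrt γ • z)‖ ^ 2) x = 0 := by
  rw [gradient_add_half_norm_sub_sq hlnp.differentiableAt]
  exact backward_update_iff hγ2.ne _ _ _ _

/-- The fully backward update `x = x_k + γ[(1/2)x + ∇ln p(x)] + √γ z` holds iff `x` is a
critical point of `u ↦ −(2γ/(2−γ)) ln p(u) + ½‖u − (2/(2−γ))(x_k + √γ z)‖²`. -/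
theorem stmt10 {d : ℕ} (γ : ℝ) (hγ0 : 0 < γ) (hγ2 : γ < 2)
    (xk z x : EuclideanSpace ℝ (Fin d)) (lnp : EuclideanSpace ℝ (Fin d) → ℝ)
    (hlnp : Differentiable ℝ lnp) :
    (x = xk + γ • ((1 / 2 : ℝ) • x + gradient lnp x) + Real.sqrt γ • z)
      ↔ gradient (fun u => -(2 * γ / (2 - γ)) * lnp u
          + (1 / 2) * ‖u - (2 / (2 - γ)) • (xk + Real.sqrt γ • z)‖ ^ 2) x = 0 :=
  stmt10_general γ hγ2 xk z x lnp hlnp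
end
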